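/- Let L be an ℵ₀-lower continuous lattice. If L is dually zipper distributive, then L is dually staircase distributive. -/
import Mathlib


/-- `dstar a s` is the element `a*s` defined (for nonempty `s`, with the sequence written in
reverse, head = last entry) by `a*⟨b⟩ = a ⊔ b` and `a*(s⌢⟨b⟩) = a ⊔ (b ⊓ a*s)`. -/
def dstar {α : Type*} [Lattice α] (a : α) : List α → α
  | [] => a
  | [b] => a ⊔ b
  | b :: s => a ⊔ (b ⊓ dstar a s)

/-- `a*B`: the set of all `a*s` for `s` a nonempty finite sequence of elements of `B`. -/
def dstarSet {α : Type*} [Lattice α] (a : α) (B : Set α) : Set α :=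
  {x | ∃ s : List α, s ≠ [] ∧ (∀ b ∈ s, b ∈ B) ∧ x = dstar a s}

section Basic
variable {L : Type*} [Lattice L]

@[simp] lemma dstar_nil (a : L) : dstar a [] = a := rfl
@[simp] lemma dstar_single (a b : L) : dstar a [b] = a ⊔ b := rfl

lemma dstar_cons (a b : L) {s : List L} (hs : s ≠ []) :
    dstar a (b :: s) = a ⊔ (b ⊓ dstar a s) := by
  cases s with
  | nil => simp at hs
  | cons c t => rfl

lemma le_dstar (a : L) : ∀ s : List L, a ≤ dstar a s
  | [] => le_rfl
  | [b] => le_sup_left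
  | _ :: _ :: _ => le_sup_left

lemma dstar_le {a w : L} (haw : a ≤ w) :
    ∀ {s : List L}, s ≠ [] → (∀ b ∈ s, b ≤ w) → dstar a s ≤ w
  | [], hs, _ => absurd rfl hs
  | [b], _, hb => sup_le haw (hb b (by simp))
  | b :: c :: t, _, hb =>
    sup_le haw (le_trans inf_le_left (hb b (by simp)))

lemma sup_le_dstar {a e : L} :
    ∀ {s : List L}, s ≠ [] → (∀ b ∈ s, e ≤ b) → a ⊔ e ≤ dstar a s
  | [], hs, _ => absurd rfl hs
  | [b], _, hb => sup_le_sup_left (hb b (by simp)) a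
  | b :: c :: t, _, hb => by
    rw [dstar_cons a b (by simp)]
    refine sup_le_sup_left (le_inf (hb b (by simp)) ?_) a
    exact le_trans le_sup_right (sup_le_dstar (by simp) (fun x hx => hb x (by simp [hx])))

lemma dstar_append_le_left (a : L) :
    ∀ {t : List L} (u : List L), t ≠ [] → dstar a (t ++ u) ≤ dstar a t
  | [], _, ht => absurd rfl ht
  | [b], u, _ => by
    cases u with
    | nil => simp
    | cons c v =>
        rw [List.singleton_append, dstar_cons a b (by simp)]
        exact sup_le_sup_left inf_le_left a
  | b :: c :: t, u, _ => by
    rw [List.cons_append, dstar_cons a b (s := c :: t) (by simp),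
      dstar_cons a b (s := c :: t ++ u) (List.append_ne_nil_of_left_ne_nil (by simp) u)]
    exact sup_le_sup_left (inf_le_inf_left b (dstar_append_le_left a u (by simp))) a

lemma dstar_append_le_right (a : L) :
    ∀ (t : List L) {u : List L}, u ≠ [] → dstar a (t ++ u) ≤ dstar a u
  | [], _, _ => le_rfl
  | b :: t, u, hu => by
    rw [List.cons_append, dstar_cons a b (List.append_ne_nil_of_right_ne_nil t hu)]
    exact le_trans (sup_le (le_dstar a _) inf_le_right) (dstar_append_le_right a t hu)

lemma dstar_append_mono (a : L) :
    ∀ (t : List L) {u u' : List L}, u ≠ [] → u' ≠ [] → dstar a u ≤ dstar a u' →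
      dstar a (t ++ u) ≤ dstar a (t ++ u')
  | [], _, _, _, _, h => h
  | b :: t, u, u', hu, hu', h => by
    rw [List.cons_append, List.cons_append,
      dstar_cons a b (List.append_ne_nil_of_right_ne_nil t hu),
      dstar_cons a b (List.append_ne_nil_of_right_ne_nil t hu')]
    exact sup_le_sup_left (inf_le_inf_left b (dstar_append_mono a t hu hu' h)) a

lemma dstar_append_eq_map (a : L) {u : List L} (hu : u ≠ []) :
    ∀ {t : List L}, t ≠ [] → dstar a (t ++ u) = dstar a (t.map (· ⊓ dstar a u))
  | [], ht => absurd rfl ht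
  | [b], _ => by
    rw [List.singleton_append, dstar_cons a b hu]; simp
  | b :: c :: t, _ => by
    have h1 : (c :: t) ++ u ≠ [] := List.append_ne_nil_of_left_ne_nil (by simp) u
    rw [List.cons_append, dstar_cons a b h1, List.map_cons,
      dstar_cons a (b ⊓ dstar a u) (by simp),
      dstar_append_eq_map a hu (t := c :: t) (by simp)]
    have hX : dstar a ((c :: t).map (· ⊓ dstar a u)) ≤ dstar a u := by
      refine dstar_le (le_dstar a u) (by simp) ?_
      intro x hx
      simp only [List.mem_map] at hx
      obtain ⟨y, _, rfl⟩ := hx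
      exact inf_le_right
    congr 1
    rw [inf_assoc, inf_eq_right.mpr hX]

lemma isGLB_inf_image {X : Set L} {m : L} (c : L) (hne : X.Nonempty) (h : IsGLB X m) :
    IsGLB ((fun y => c ⊓ y) '' X) (c ⊓ m) := by
  constructor
  · rintro _ ⟨x, hx, rfl⟩
    exact inf_le_inf_left c (h.1 hx)
  · intro y hy
    obtain ⟨x₀, hx₀⟩ := hne
    refine le_inf (le_trans (hy ⟨x₀, hx₀, rfl⟩) inf_le_left) (h.2 ?_)
    intro x hx
    exact le_trans (hy ⟨x, hx, rfl⟩) inf_le_right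

lemma isGLB_of_pieces {T M : Set L} {m : L} (hM : IsGLB M m)
    (h1 : ∀ x ∈ T, ∃ S : Set L, ∃ μ, IsGLB S μ ∧ μ ∈ M ∧ x ∈ S)
    (h2 : ∀ μ ∈ M, ∃ S : Set L, IsGLB S μ ∧ S ⊆ T) : IsGLB T m := by
  constructor
  · intro x hx
    obtain ⟨S, μ, hS, hμM, hxS⟩ := h1 x hx
    exact le_trans (hM.1 hμM) (hS.1 hxS)
  · intro x hx
    refine hM.2 ?_
    intro μ hμ
    obtain ⟨S, hS, hST⟩ := h2 μ hμ
    exact hS.2 (fun y hy => hx (hST hy))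

lemma exists_subtype_list {S : Set L} :
    ∀ {t : List L}, (∀ b ∈ t, b ∈ S) → ∃ l : List S, l.map Subtype.val = t
  | [], _ => ⟨[], rfl⟩
  | b :: t, h => by
    obtain ⟨l, hl⟩ := exists_subtype_list (t := t) (fun x hx => h x (by simp [hx]))
    exact ⟨⟨b, h b (by simp)⟩ :: l, by simp [hl]⟩

lemma countable_dstar_lists (a : L) {S : Set L} (hS : S.Countable) :
    Set.Countable {x | ∃ t : List L, (∀ b ∈ t, b ∈ S) ∧ x = dstar a t} := by
  haveI := hS.to_subtype
  refine Set.Countable.mono ?_ (Set.countable_range (fun l : List S => dstar a (l.map Subtype.val)))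
  rintro x ⟨t, ht, rfl⟩
  obtain ⟨l, hl⟩ := exists_subtype_list ht
  exact ⟨l, by simp only []; rw [hl]⟩

lemma directedOn_image_mono {f : L → L} (hf : Monotone f) {S : Set L}
    (h : DirectedOn (· ≥ ·) S) : DirectedOn (· ≥ ·) (f '' S) := by
  rintro _ ⟨x, hx, rfl⟩ _ ⟨y, hy, rfl⟩
  obtain ⟨z, hz, hzx, hzy⟩ := h x hx y hy
  exact ⟨f z, ⟨z, hz, rfl⟩, hf hzx, hf hzy⟩

end Basic

inductive IsExp {L : Type*} [Lattice L] (S : Set L) (c : L) : List Bool → List L → Prop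
  | singleC : IsExp S c [true] [c]
  | singleD (t : List L) (h1 : t ≠ []) (h2 : ∀ b ∈ t, b ∈ S) : IsExp S c [false] t
  | consC {p t} : IsExp S c p t → IsExp S c (true :: p) (c :: t)
  | consD {p u} (t : List L) (h1 : t ≠ []) (h2 : ∀ b ∈ t, b ∈ S) :
      IsExp S c p u → IsExp S c (false :: p) (t ++ u)

section Exp
variable {L : Type*} [Lattice L] {S : Set L} {c : L}

lemma IsExp.ne_nil : ∀ {p t}, IsExp S c p t → t ≠ []
  | _, _, .singleC => by simp
  | _, _, .singleD t h1 h2 => h1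
  | _, _, .consC _ => by simp
  | _, _, .consD t h1 h2 _ => List.append_ne_nil_of_left_ne_nil h1 _

lemma IsExp.mem : ∀ {p t}, IsExp S c p t → ∀ b ∈ t, b = c ∨ b ∈ S
  | _, _, .singleC => by simp
  | _, _, .singleD t h1 h2 => fun b hb => Or.inr (h2 b hb)
  | _, _, .consC h => by
    intro b hb
    rcases List.mem_cons.mp hb with rfl | hb
    · exact Or.inl rfl
    · exact h.mem b hb
  | _, _, .consD t h1 h2 h => by
    intro b hb
    rcases List.mem_append.mp hb with hb | hb
    · exact Or.inr (h2 b hb)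
    · exact h.mem b hb

lemma IsExp.exists_exp (hS : S.Nonempty) : ∀ {p : List Bool}, p ≠ [] → ∃ t, IsExp S c p t := by
  obtain ⟨b₀, hb₀⟩ := hS
  intro p
  induction p with
  | nil => simp
  | cons x p ih =>
    intro _
    rcases eq_or_ne p [] with rfl | hp
    · cases x
      · exact ⟨[b₀], .singleD _ (by simp) (by simpa)⟩
      · exact ⟨[c], .singleC⟩
    · obtain ⟨t, ht⟩ := ih hp
      cases x
      · exact ⟨[b₀] ++ t, .consD _ (by simp) (by simpa) ht⟩
      · exact ⟨c :: t, .consC ht⟩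
end Exp

section Exp2
variable {L : Type*} [Lattice L] {S : Set L} {c : L}

lemma IsExp.pne : ∀ {p t}, IsExp S c p t → p ≠ []
  | _, _, .singleC => by simp
  | _, _, .singleD _ _ _ => by simp
  | _, _, .consC _ => by simp
  | _, _, .consD _ _ _ _ => by simp

lemma IsExp.directed (a : L) {p t t'} (h1 : IsExp S c p t) (h2 : IsExp S c p t') :
    ∃ u, IsExp S c p u ∧ dstar a u ≤ dstar a t ∧ dstar a u ≤ dstar a t' := by
  induction h1 generalizing t' with
  | singleC =>
    cases h2 with
    | singleC => exact ⟨[c], .singleC, le_rfl, le_rfl⟩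
    | consC h' => exact absurd rfl h'.pne
  | singleD t1 ht1 ht1' =>
    cases h2 with
    | singleD ht2 ht2' =>
      refine ⟨t1 ++ t', .singleD _ (List.append_ne_nil_of_left_ne_nil ht1 _) ?_,
        dstar_append_le_left a t' ht1, dstar_append_le_right a t1 (by assumption)⟩
      intro b hb
      rcases List.mem_append.mp hb with hb | hb
      · exact ht1' b hb
      · exact (by assumption : ∀ b ∈ t', b ∈ S) b hb
    | consD t2 _ _ h' => exact absurd rfl h'.pne
  | consC h ih =>
    rename_i p t
    cases h2 with
    | singleC => exact absurd rfl h.pne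
    | consC h' =>
      rename_i t'
      obtain ⟨u, hu, hu1, hu2⟩ := ih h'
      refine ⟨c :: u, .consC hu, ?_, ?_⟩
      · rw [dstar_cons a c hu.ne_nil, dstar_cons a c h.ne_nil]
        exact sup_le_sup_left (inf_le_inf_left c hu1) a
      · rw [dstar_cons a c hu.ne_nil, dstar_cons a c h'.ne_nil]
        exact sup_le_sup_left (inf_le_inf_left c hu2) a
  | consD t1 ht1 ht1' h ih =>
    rename_i p u1
    cases h2 with
    | singleD t2 _ _ => exact absurd rfl h.pne
    | consD t2 ht2 ht2' h' =>
      rename_i u2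
      obtain ⟨u, hu, hu1, hu2⟩ := ih h'
      have htu : t2 ++ u ≠ [] := List.append_ne_nil_of_left_ne_nil ht2 _
      refine ⟨t1 ++ (t2 ++ u), ?_, ?_, ?_⟩
      · rw [← List.append_assoc]
        refine .consD _ (List.append_ne_nil_of_left_ne_nil ht1 _) ?_ hu
        intro b hb
        rcases List.mem_append.mp hb with hb | hb
        · exact ht1' b hb
        · exact ht2' b hb
      · exact dstar_append_mono a t1 htu h.ne_nil
          ((dstar_append_le_right a t2 hu.ne_nil).trans hu1)
      · exact (dstar_append_le_right a t1 htu).trans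
          (dstar_append_mono a t2 hu.ne_nil h'.ne_nil hu2)

end Exp2


/-- A lattice is dually zipper distributive. -/
def DuallyZipperDistributive (α : Type*) [Lattice α] : Prop :=
  ∀ a b c : α, IsGLB (dstarSet a {b, c}) (a ⊔ (b ⊓ c))

/-- A lattice is dually staircase distributive. -/
def DuallyStaircaseDistributive (α : Type*) [Lattice α] : Prop :=
  ∀ (a : α) (B : Finset α) (h : B.Nonempty), IsGLB (dstarSet a ↑B) (a ⊔ B.inf' h id)

/-- A lattice is `ℵ₀`-lower continuous. -/
def Aleph0LowerContinuous (α : Type*) [SemilatticeSup α] : Prop :=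
  ∀ (a : α) (X : Set α) (m : α), X.Nonempty → X.Countable → DirectedOn (· ≥ ·) X →
    IsGLB X m → IsGLB ((fun x => a ⊔ x) '' X) (a ⊔ m)

section Main
variable {L : Type*} [Lattice L]

lemma exists_preimage_list {α β : Type*} {S : Set α} {f : α → β} :
    ∀ {l : List β}, (∀ b ∈ l, b ∈ f '' S) → ∃ t : List α, (∀ x ∈ t, x ∈ S) ∧ t.map f = l
  | [], _ => ⟨[], by simp, rfl⟩
  | b :: l, h => by
    obtain ⟨t, ht, rfl⟩ := exists_preimage_list (l := l) (fun x hx => h x (by simp [hx]))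
    obtain ⟨x, hxS, rfl⟩ := h b (by simp)
    refine ⟨x :: t, ?_, rfl⟩
    intro y hy
    rcases List.mem_cons.mp hy with rfl | hy
    · exact hxS
    · exact ht y hy

lemma aux_staircase (hlc : Aleph0LowerContinuous L) (hz : DuallyZipperDistributive L) :
    ∀ (n : ℕ) (B : Finset L), B.card ≤ n → ∀ (h : B.Nonempty) (a : L),
      IsGLB (dstarSet a ↑B) (a ⊔ B.inf' h id) := by
  intro n
  induction n with
  | zero =>
    intro B hB h a
    have := Finset.card_pos.mpr h
    omega
  | succ n IH =>
    intro B hBcard h a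
    classical
    rcases eq_or_lt_of_le (Finset.one_le_card.mpr h) with h1 | h2
    · -- singleton case
      obtain ⟨b, rfl⟩ := Finset.card_eq_one.mp h1.symm
      have hval : ({b} : Finset L).inf' h id = b := by simp
      rw [hval]
      constructor
      · rintro x ⟨s, hs, hsb, rfl⟩
        refine sup_le_dstar hs fun x hx => ?_
        have : x = b := by simpa using hsb x hx
        exact this.ge
      · intro x hx
        exact hx ⟨[b], by simp, by simp, by simp⟩
    · -- main case
      obtain ⟨c, hc⟩ := h
      set B' := B.erase c with hB'def
      have hB'ne : B'.Nonempty := by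
        rw [← Finset.card_pos, hB'def, Finset.card_erase_of_mem hc]; omega
      have hB'card : B'.card ≤ n := by
        rw [hB'def, Finset.card_erase_of_mem hc]; omega
      set d := B'.inf' hB'ne id with hd
      have hinf : B.inf' ⟨c, hc⟩ id = c ⊓ d := by
        apply le_antisymm
        · refine le_inf (Finset.inf'_le _ hc) ?_
          rw [hd]
          exact Finset.le_inf' _ _ fun b hb =>
            Finset.inf'_le _ (Finset.mem_of_mem_erase hb)
        · refine Finset.le_inf' _ _ fun b hb => ?_
          rcases eq_or_ne b c with rfl | hbc
          · exact inf_le_left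
          · exact inf_le_right.trans
              (hd ▸ Finset.inf'_le _ (Finset.mem_erase.mpr ⟨hbc, hb⟩))
      -- G1 : glb of appended sets
      have G1 : ∀ u : List L, u ≠ [] →
          IsGLB {x | ∃ t : List L, t ≠ [] ∧ (∀ b ∈ t, b ∈ (↑B' : Set L)) ∧
            x = dstar a (t ++ u)} (a ⊔ (d ⊓ dstar a u)) := by
        intro u hu
        have hB''ne : (B'.image (· ⊓ dstar a u)).Nonempty := hB'ne.image _
        have hB''card : (B'.image (· ⊓ dstar a u)).card ≤ n :=
          le_trans Finset.card_image_le hB'card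
        have hIH := IH _ hB''card hB''ne a
        have hinf'' : (B'.image (· ⊓ dstar a u)).inf' hB''ne id = d ⊓ dstar a u := by
          rw [Finset.inf'_image]
          apply le_antisymm
          · refine le_inf ?_ ?_
            · rw [hd]
              exact Finset.le_inf' _ _ fun b hb =>
                (Finset.inf'_le _ hb).trans inf_le_left
            · obtain ⟨b₀, hb₀⟩ := hB'ne
              exact (Finset.inf'_le _ hb₀).trans inf_le_right
          · refine Finset.le_inf' _ _ fun b hb => ?_
            exact inf_le_inf_right _ (hd ▸ Finset.inf'_le _ hb)
        rw [hinf''] at hIH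
        have hset : dstarSet a ↑(B'.image (· ⊓ dstar a u)) =
            {x | ∃ t : List L, t ≠ [] ∧ (∀ b ∈ t, b ∈ (↑B' : Set L)) ∧
              x = dstar a (t ++ u)} := by
          ext x
          constructor
          · rintro ⟨l, hl, hlB, rfl⟩
            have hlB' : ∀ b ∈ l, b ∈ (· ⊓ dstar a u) '' (↑B' : Set L) := by
              intro b hb
              have := hlB b hb
              rwa [Finset.coe_image] at this
            obtain ⟨t, ht, rfl⟩ := exists_preimage_list hlB'
            have htne : t ≠ [] := by rintro rfl; exact hl rfl
            exact ⟨t, htne, ht, (dstar_append_eq_map a hu htne).symm⟩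
          · rintro ⟨t, htne, htB, rfl⟩
            refine ⟨t.map (· ⊓ dstar a u), by simpa using htne, ?_,
              dstar_append_eq_map a hu htne⟩
            intro b hb
            obtain ⟨y, hy, rfl⟩ := List.mem_map.mp hb
            rw [Finset.coe_image]
            exact ⟨y, htB y hy, rfl⟩
        rw [hset] at hIH
        exact hIH
      -- membership in B
      have hmemB : ∀ {p : List Bool} {t : List L}, IsExp (↑B' : Set L) c p t →
          ∀ b ∈ t, b ∈ (↑B : Set L) := by
        intro p t ht b hb
        rcases ht.mem b hb with rfl | hb'
        · exact Finset.mem_coe.mpr hc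
        · exact Finset.mem_coe.mpr (Finset.mem_of_mem_erase (Finset.mem_coe.mp hb'))
      -- the key claim
      have claim : ∀ p : List Bool, p ≠ [] →
          IsGLB {x | ∃ t, IsExp (↑B' : Set L) c p t ∧ x = dstar a t}
            (dstar a (p.map fun bo => if bo then c else d)) := by
        intro p
        induction p with
        | nil => intro hp; exact absurd rfl hp
        | cons bo p ihp =>
          intro _
          rcases eq_or_ne p [] with rfl | hp
          · cases bo
            · -- [false]
              have hsetd : {x | ∃ t, IsExp (↑B' : Set L) c [false] t ∧ x = dstar a t} =
                  dstarSet a ↑B' := by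
                ext x
                constructor
                · rintro ⟨t, ht, rfl⟩
                  cases ht with
                  | singleD h1 h2 => exact ⟨t, by assumption, by assumption, rfl⟩
                  | consD t1 hh1 hh2 h' => exact absurd rfl h'.pne
                · rintro ⟨t, htne, htB, rfl⟩
                  exact ⟨t, .singleD t htne htB, rfl⟩
              rw [hsetd]
              have := IH B' hB'card hB'ne a
              simpa [hd] using this
            · -- [true]
              constructor
              · rintro x ⟨t, ht, rfl⟩
                cases ht with
                | singleC => simp
                | consC h' => exact absurd rfl h'.pne
              · intro x hx
                simpa using hx ⟨[c], .singleC, rfl⟩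
          · have hmapne : p.map (fun bo => if bo then c else d) ≠ [] := by
              simpa using hp
            have hglb' := ihp hp
            have hS'ne : {x | ∃ t, IsExp (↑B' : Set L) c p t ∧ x = dstar a t}.Nonempty := by
              obtain ⟨t, ht⟩ := IsExp.exists_exp (S := (↑B' : Set L)) (c := c)
                (by exact_mod_cast hB'ne) hp
              exact ⟨dstar a t, t, ht, rfl⟩
            have hS'cnt : {x | ∃ t, IsExp (↑B' : Set L) c p t ∧ x = dstar a t}.Countable := by
              refine Set.Countable.mono ?_ (countable_dstar_lists a B.countable_toSet)
              rintro x ⟨t, ht, rfl⟩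
              exact ⟨t, hmemB ht, rfl⟩
            have hS'dir : DirectedOn (· ≥ ·)
                {x | ∃ t, IsExp (↑B' : Set L) c p t ∧ x = dstar a t} := by
              rintro x ⟨t, ht, rfl⟩ y ⟨t', ht', rfl⟩
              obtain ⟨u, hu, hu1, hu2⟩ := ht.directed a ht'
              exact ⟨dstar a u, ⟨u, hu, rfl⟩, hu1, hu2⟩
            cases bo
            · -- false :: p
              have hMd := isGLB_inf_image d hS'ne hglb'
              have hM := hlc a _ _ (hS'ne.image _) (hS'cnt.image _)
                (directedOn_image_mono (fun _ _ hxy => inf_le_inf_left d hxy) hS'dir) hMd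
              have hval : dstar a ((false :: p).map fun bo => if bo then c else d) =
                  a ⊔ (d ⊓ dstar a (p.map fun bo => if bo then c else d)) := by
                rw [List.map_cons, if_neg (by simp)]
                exact dstar_cons a d hmapne
              rw [hval]
              refine isGLB_of_pieces hM ?_ ?_
              · rintro x ⟨t, ht, rfl⟩
                cases ht with
                | singleD h1 h2 => exact absurd rfl hp
                | consD t1 hh1 hh2 hu =>
                  rename_i u
                  refine ⟨_, a ⊔ (d ⊓ dstar a u), G1 u hu.ne_nil, ?_, ?_⟩
                  · exact ⟨d ⊓ dstar a u, ⟨dstar a u, ⟨u, hu, rfl⟩, rfl⟩, rfl⟩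
                  · exact ⟨t1, hh1, hh2, rfl⟩
              · rintro μ ⟨y, ⟨z, ⟨u, hu, rfl⟩, rfl⟩, rfl⟩
                refine ⟨_, G1 u hu.ne_nil, ?_⟩
                rintro x ⟨t, htne, htB, rfl⟩
                exact ⟨t ++ u, .consD t htne htB hu, rfl⟩
            · -- true :: p
              have hMc := isGLB_inf_image c hS'ne hglb'
              have hM := hlc a _ _ (hS'ne.image _) (hS'cnt.image _)
                (directedOn_image_mono (fun _ _ hxy => inf_le_inf_left c hxy) hS'dir) hMc
              have hval : dstar a ((true :: p).map fun bo => if bo then c else d) =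
                  a ⊔ (c ⊓ dstar a (p.map fun bo => if bo then c else d)) := by
                rw [List.map_cons, if_pos (by simp)]
                exact dstar_cons a c hmapne
              rw [hval]
              have hset2 : {x | ∃ t, IsExp (↑B' : Set L) c (true :: p) t ∧ x = dstar a t} =
                  (fun y => a ⊔ y) '' ((fun y => c ⊓ y) ''
                    {x | ∃ t, IsExp (↑B' : Set L) c p t ∧ x = dstar a t}) := by
                ext x
                constructor
                · rintro ⟨t, ht, rfl⟩
                  cases ht with
                  | singleC => exact absurd rfl hp
                  | consC h' =>
                    rename_i t'
                    exact ⟨c ⊓ dstar a t', ⟨dstar a t', ⟨t', h', rfl⟩, rfl⟩,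
                      (dstar_cons a c h'.ne_nil).symm⟩
                · rintro ⟨y, ⟨z, ⟨t', h', rfl⟩, rfl⟩, rfl⟩
                  exact ⟨c :: t', .consC h', (dstar_cons a c h'.ne_nil).symm⟩
              rw [hset2]
              exact hM
      -- final assembly
      rw [hinf]
      constructor
      · rintro x ⟨s, hs, hsB, rfl⟩
        refine sup_le_dstar hs fun b hb => ?_
        rcases eq_or_ne b c with rfl | hbc
        · exact inf_le_left
        · refine inf_le_right.trans ?_
          rw [hd]
          exact Finset.inf'_le _ (Finset.mem_erase.mpr ⟨hbc, Finset.mem_coe.mp (hsB b hb)⟩)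
      · intro x hx
        refine (hz a c d).2 ?_
        rintro y ⟨s, hs, hscd, rfl⟩
        have hexists : ∀ s : List L, (∀ b ∈ s, b ∈ ({c, d} : Set L)) →
            ∃ p : List Bool, p.map (fun bo => if bo then c else d) = s := by
          intro s hsmem
          induction s with
          | nil => exact ⟨[], rfl⟩
          | cons b s ih =>
            obtain ⟨p, hpm⟩ := ih fun z hz' => hsmem z (by simp [hz'])
            rcases hsmem b (by simp) with rfl | hbd
            · exact ⟨true :: p, by simp [hpm]⟩
            · rw [Set.mem_singleton_iff] at hbd
              subst hbd
              exact ⟨false :: p, by simp [hpm]⟩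
        obtain ⟨p, hpmap⟩ := hexists s hscd
        have hpne : p ≠ [] := by
          rintro rfl
          exact hs hpmap.symm
        have hxle : x ≤ dstar a (p.map fun bo => if bo then c else d) := by
          refine (claim p hpne).2 ?_
          rintro z ⟨t, ht, rfl⟩
          exact hx ⟨t, ht.ne_nil, hmemB ht, rfl⟩
        rwa [hpmap] at hxle

end Main


/-- Every `ℵ₀`-lower continuous, dually zipper distributive lattice is dually staircase
distributive. -/
theorem duallyStaircase_of_zipper_aleph0LowerContinuous {L : Type*} [Lattice L]
    (hlc : Aleph0LowerContinuous L) (hz : DuallyZipperDistributive L) :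
    DuallyStaircaseDistributive L := by
  intro a B h
  exact aux_staircase hlc hz B.card B le_rfl h a
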